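/- The evaluation map φ from graded trees over C ∪ M to an ordered algebra (A, M, ≤), defined by φ(q[]) = q for q ∈ C and φ(μ[t_1,...,t_r]) = μ(φ(t_1),...,φ(t_r)) for μ ∈ M of arity r, is order-preserving: t ⪯ s implies φ(t) ≤ φ(s), provided ≤ is a divisibility order compatible with the operation ordering ⊲. -/
import Mathlib


universe u

/-- Finite ordered trees with labels in `Q`. -/
inductive LTree (Q : Type u) : Type u
  | node : Q → List (LTree Q) → LTree Q

mutual
  /-- Tree embeddability: `Emb r t s` iff `t` embeds into a subtree of `s`, or the
  roots compare via `r` and the lists of immediate subtrees compare in Higman's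
  order induced by embeddability. -/
  inductive Emb {Q : Type u} (r : Q → Q → Prop) : LTree Q → LTree Q → Prop
    | subtree {t s : LTree Q} {q : Q} {ss : List (LTree Q)} :
        Emb r t s → s ∈ ss → Emb r t (.node q ss)
    | node {p q : Q} {ts ss : List (LTree Q)} :
        r p q → ListEmb r ts ss → Emb r (.node p ts) (.node q ss)

  /-- Higman's embedding between lists of trees, with `Emb r` on the elements. -/
  inductive ListEmb {Q : Type u} (r : Q → Q → Prop) : List (LTree Q) → List (LTree Q) → Prop
    | nil : ListEmb r [] []
    | cons {t s : LTree Q} {ts ss : List (LTree Q)} :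
        Emb r t s → ListEmb r ts ss → ListEmb r (t :: ts) (s :: ss)
    | skip {s : LTree Q} {ts ss : List (LTree Q)} :
        ListEmb r ts ss → ListEmb r ts (s :: ss)
end

/-- Higman's embedding order on finite sequences. -/
def HigmanLE {α : Type*} (r : α → α → Prop) (l₁ l₂ : List α) : Prop :=
  ∃ l' : List α, l'.Sublist l₂ ∧ List.Forall₂ r l₁ l'

/-- The evaluation relation of graded trees over C ∪ M into the algebra:
`Eval arity app ι t a` holds iff `t` is a graded tree (each node labelled in `C` is
a leaf, each node labelled by an operation `μ` has exactly `arity μ` children) and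
its evaluation, computed by `φ(q[]) = ι q` and `φ(μ[t₁,...,t_r]) = μ(φ t₁,...,φ t_r)`,
is `a`. -/
inductive Eval {A C M : Type u} (arity : M → ℕ)
    (app : ∀ μ : M, (Fin (arity μ) → A) → A) (ι : C → A) :
    LTree (C ⊕ M) → A → Prop
  | leaf (c : C) : Eval arity app ι (.node (Sum.inl c) []) (ι c)
  | node (μ : M) (ts : Fin (arity μ) → LTree (C ⊕ M)) (as_ : Fin (arity μ) → A) :
      (∀ i, Eval arity app ι (ts i) (as_ i)) →
      Eval arity app ι (.node (Sum.inr μ) (List.ofFn ts)) (app μ as_)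

theorem forall₂_ofFn' {α β : Type*} {R : α → β → Prop} :
    ∀ {n} {f : Fin n → α} {g : Fin n → β}, (∀ i, R (f i) (g i)) →
      List.Forall₂ R (List.ofFn f) (List.ofFn g) := by
  intro n
  induction n with
  | zero => intro f g _; simp
  | succ n ih =>
      intro f g h
      simp only [List.ofFn_succ]
      exact List.Forall₂.cons (h 0) (ih fun i => h i.succ)

theorem listEmb_higman {A C M : Type u} (le : A → A → Prop)
    (arity : M → ℕ) (app : ∀ μ : M, (Fin (arity μ) → A) → A) (ι : C → A)
    {r : (C ⊕ M) → (C ⊕ M) → Prop} :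
    ∀ {l1 l2 : List (LTree (C ⊕ M))} {as bs : List A},
    ListEmb r l1 l2 →
    List.Forall₂ (Eval arity app ι) l1 as →
    List.Forall₂ (fun s b =>
      ∀ t a, Emb r t s → Eval arity app ι t a → le a b) l2 bs →
    HigmanLE le as bs := by
  intro l1 l2
  induction l2 generalizing l1 with
  | nil =>
      intro as bs h h1 h2
      cases h; cases h1; cases h2
      exact ⟨[], List.Sublist.refl _, List.Forall₂.nil⟩
  | cons s ss ih =>
      intro as bs h h1 h2
      cases h with
      | cons hts hrest =>
          cases h1 with | cons ha h1 =>
          cases h2 with | cons hb h2 =>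
          obtain ⟨l', hsub, hf⟩ := ih hrest h1 h2
          exact ⟨_ :: l', hsub.cons₂ _, List.Forall₂.cons (hb _ _ hts ha) hf⟩
      | skip hrest =>
          cases h2 with | cons hb h2 =>
          obtain ⟨l', hsub, hf⟩ := ih hrest h1 h2
          exact ⟨l', hsub.cons _, hf⟩

theorem eval_aux {A C M : Type u}
    (le : A → A → Prop) (htrans : Transitive le)
    (arity : M → ℕ) (app : ∀ μ : M, (Fin (arity μ) → A) → A)
    (tri : M → M → Prop) (ι : C → A)
    (hdiv : ∀ (μ : M) (a : Fin (arity μ) → A) (i : Fin (arity μ)), le (a i) (app μ a))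
    (hcompat : ∀ (lam mu : M) (a : Fin (arity lam) → A) (b : Fin (arity mu) → A),
      tri lam mu → HigmanLE le (List.ofFn a) (List.ofFn b) → le (app lam a) (app mu b)) :
    ∀ {s : LTree (C ⊕ M)} {b : A}, Eval arity app ι s b →
      ∀ t a, Emb (Sum.LiftRel (fun c c' : C => le (ι c) (ι c')) tri) t s →
        Eval arity app ι t a → le a b := by
  intro s b hs
  induction hs with
  | leaf c =>
      intro t a hts ht
      cases hts with
      | subtree h hmem => simp at hmem
      | node hr hlist =>
          cases hlist
          cases hr with
          | inl hle => cases ht; exact hle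
  | node μ ss as_ h ih =>
      intro t a hts ht
      cases hts with
      | subtree h' hmem =>
          rw [List.mem_ofFn] at hmem
          obtain ⟨i, rfl⟩ := hmem
          exact htrans (ih i _ _ h' ht) (hdiv μ as_ i)
      | node hr hlist =>
          cases hr with
          | inr htri =>
              cases ht
              rename_i tt aa hevals
              refine hcompat _ μ aa as_ htri ?_
              exact listEmb_higman le arity app ι hlist
                (forall₂_ofFn' hevals)
                (forall₂_ofFn' fun i => ih i)

/-- the evaluation map from graded trees over C ∪ M to an ordered
algebra (A, M, ≤) is order-preserving: t ⪯ s implies φ(t) ≤ φ(s), provided ≤ is a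
divisibility order compatible with the operation ordering ⊲. -/
theorem eval_orderPreserving {A C M : Type u}
    (le : A → A → Prop) (hrefl : Reflexive le) (htrans : Transitive le)
    (arity : M → ℕ) (app : ∀ μ : M, (Fin (arity μ) → A) → A)
    (tri : M → M → Prop) (ι : C → A)
    -- ordered algebra: operations are monotone
    (hordered : ∀ (μ : M) (a b : Fin (arity μ) → A),
      (∀ i, le (a i) (b i)) → le (app μ a) (app μ b))
    -- divisibility order: each argument is below the value
    (hdiv : ∀ (μ : M) (a : Fin (arity μ) → A) (i : Fin (arity μ)), le (a i) (app μ a))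
    -- compatibility of ≤ with ⊲
    (hcompat : ∀ (lam mu : M) (a : Fin (arity lam) → A) (b : Fin (arity mu) → A),
      tri lam mu → HigmanLE le (List.ofFn a) (List.ofFn b) → le (app lam a) (app mu b))
    -- the label ordering on C ∪ M: ≤ (via ι) on C, ⊲ on M
    (t s : LTree (C ⊕ M)) (a b : A)
    (hts : Emb (Sum.LiftRel (fun c c' : C => le (ι c) (ι c')) tri) t s)
    (ht : Eval arity app ι t a) (hs : Eval arity app ι s b) :
    le a b := by
  exact eval_aux le htrans arity app tri ι hdiv hcompat hs t a hts ht
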